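/- In the localized path algebra A of the doubled A_2 quiver with Φ = a_1^{-1} + a_2 as above, the 2-form ω₁ = ¼(e* de dΦ + Φ de* de - e* dΦ^{-1} de - Φ^{-1} de de* + de* d(eΦ) - d(eΦ) de*) ∈ Ω²_R(A) is congruent, modulo the subspace of graded commutators [Ω̄A, Ω̄A], to ½(Φ de* de - Φ^{-1} de de*). -/

import Mathlib

/-!
Work modulo graded commutators: there degree-`0` forms commute with everything, `1`-forms
anticommute, and (in characteristic `≠ 2`) squares of `1`-forms vanish. Differentiating
`Φ e* Φ = e*` and `Φ Φ⁻¹ = 1` rewrites `e* dΦ⁻¹ de` through `Φ de* de` and terms that cancel up to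
commutators, and `d(eΦ) = de Φ + e dΦ` reduces what is left to `e* de dΦ ≡ e dΦ de*`. That last
congruence follows by inserting `dΦ = de e* + e de* - a₁⁻¹ (de* e + e* de) a₁⁻¹`: since
`e² = e*² = e de = de e = 0`, both sides reduce, up to squares of `1`-forms, to the two orders of
one product of two `1`-forms.
-/

/-- The `k`-span of graded commutators of a graded algebra `Ω` with grading `G`. -/
def gradedCommSpan (k : Type*) [Field k] {Ω : Type*} [Ring Ω] [Algebra k Ω]
    (G : ℕ → Submodule k Ω) : Submodule k Ω :=
  Submodule.span k
    {z : Ω | ∃ (m l : ℕ) (x y : Ω), x ∈ G m ∧ y ∈ G l ∧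
      z = x * y - ((-1 : k) ^ (m * l)) • (y * x)}

section Corner

theorem IsIdempotentElem.mul_eq_of_mul_mul_eq {R : Type*} [Semigroup R] {e f x : R}
    (he : IsIdempotentElem e) (hx : e * x * f = x) : e * x = x := by
  rw [← hx, ← mul_assoc, ← mul_assoc, he.eq]

theorem IsIdempotentElem.mul_eq_of_mul_mul_eq' {R : Type*} [Semigroup R] {e f x : R}
    (hf : IsIdempotentElem f) (hx : e * x * f = x) : x * f = x := by
  rw [← hx, mul_assoc, hf.eq]

theorem mul_eq_zero_of_mul_mul_eq {R : Type*} [SemigroupWithZero R] {e f e' f' x y : R}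
    (h : f * e' = 0) (hx : e * x * f = x) (hy : e' * y * f' = y) : x * y = 0 := by
  rw [← hx, ← hy, mul_assoc, ← mul_assoc f, ← mul_assoc f, h, zero_mul, zero_mul, mul_zero]

theorem add_mul_add_eq_one_of_corners {R : Type*} [Ring R] {e₁ e₂ x₁ x₂ y₁ y₂ : R}
    (h₁₂ : e₁ * e₂ = 0) (h₂₁ : e₂ * e₁ = 0) (hsum : e₁ + e₂ = 1)
    (hx₁ : e₁ * x₁ * e₁ = x₁) (hy₁ : e₁ * y₁ * e₁ = y₁)
    (hx₂ : e₂ * x₂ * e₂ = x₂) (hy₂ : e₂ * y₂ * e₂ = y₂)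
    (h₁ : x₁ * y₁ = e₁) (h₂ : x₂ * y₂ = e₂) : (x₁ + x₂) * (y₁ + y₂) = 1 := by
  rw [add_mul, mul_add, mul_add, h₁, h₂, mul_eq_zero_of_mul_mul_eq h₁₂ hx₁ hy₂,
    mul_eq_zero_of_mul_mul_eq h₂₁ hx₂ hy₁, add_zero, zero_add, hsum]

end Corner

/-- `b₁` and `b₂` are the inverses of `a₁ = e₁ + e* e` and `a₂ = e₂ + e e*` in the corners
`e₁ A e₁` and `e₂ A e₂`, so that `Φ = b₁ + a₂` and `Φ⁻¹ = a₁ + b₂`. -/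
structure IsLocalizedDoubledA2 {A : Type*} [Ring A] (e1 e2 E Es b1 b2 : A) : Prop where
  isIdempotentElem_e1 : IsIdempotentElem e1
  isIdempotentElem_e2 : IsIdempotentElem e2
  e1_mul_e2 : e1 * e2 = 0
  e2_mul_e1 : e2 * e1 = 0
  e1_add_e2 : e1 + e2 = 1
  corner_E : e2 * E * e1 = E
  corner_Es : e1 * Es * e2 = Es
  corner_b1 : e1 * b1 * e1 = b1
  a1_mul_b1 : (e1 + Es * E) * b1 = e1
  b1_mul_a1 : b1 * (e1 + Es * E) = e1
  corner_b2 : e2 * b2 * e2 = b2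
  a2_mul_b2 : (e2 + E * Es) * b2 = e2
  b2_mul_a2 : b2 * (e2 + E * Es) = e2

namespace IsLocalizedDoubledA2

variable {A : Type*} [Ring A] {e1 e2 E Es b1 b2 : A}

theorem E_mul_E (h : IsLocalizedDoubledA2 e1 e2 E Es b1 b2) : E * E = 0 :=
  mul_eq_zero_of_mul_mul_eq h.e1_mul_e2 h.corner_E h.corner_E

theorem Es_mul_Es (h : IsLocalizedDoubledA2 e1 e2 E Es b1 b2) : Es * Es = 0 :=
  mul_eq_zero_of_mul_mul_eq h.e2_mul_e1 h.corner_Es h.corner_Es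

theorem b1_mul_e1 (h : IsLocalizedDoubledA2 e1 e2 E Es b1 b2) : b1 * e1 = b1 :=
  h.isIdempotentElem_e1.mul_eq_of_mul_mul_eq' h.corner_b1

theorem corner_a1 (h : IsLocalizedDoubledA2 e1 e2 E Es b1 b2) :
    e1 * (e1 + Es * E) * e1 = e1 + Es * E := by
  have h1Es : e1 * Es = Es := h.isIdempotentElem_e1.mul_eq_of_mul_mul_eq h.corner_Es
  have hE1 : E * e1 = E := h.isIdempotentElem_e1.mul_eq_of_mul_mul_eq' h.corner_E
  simp only [mul_add, add_mul, ← mul_assoc, h.isIdempotentElem_e1.eq, h1Es]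
  rw [mul_assoc, hE1]

theorem corner_a2 (h : IsLocalizedDoubledA2 e1 e2 E Es b1 b2) :
    e2 * (e2 + E * Es) * e2 = e2 + E * Es := by
  have h2E : e2 * E = E := h.isIdempotentElem_e2.mul_eq_of_mul_mul_eq h.corner_E
  have hEs2 : Es * e2 = Es := h.isIdempotentElem_e2.mul_eq_of_mul_mul_eq' h.corner_Es
  simp only [mul_add, add_mul, ← mul_assoc, h.isIdempotentElem_e2.eq, h2E]
  rw [mul_assoc, hEs2]

theorem phi_mul_phiInv (h : IsLocalizedDoubledA2 e1 e2 E Es b1 b2) :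
    (b1 + (e2 + E * Es)) * ((e1 + Es * E) + b2) = 1 :=
  add_mul_add_eq_one_of_corners h.e1_mul_e2 h.e2_mul_e1 h.e1_add_e2 h.corner_b1 h.corner_a1
    h.corner_a2 h.corner_b2 h.b1_mul_a1 h.a2_mul_b2

theorem phiInv_mul_phi (h : IsLocalizedDoubledA2 e1 e2 E Es b1 b2) :
    ((e1 + Es * E) + b2) * (b1 + (e2 + E * Es)) = 1 :=
  add_mul_add_eq_one_of_corners h.e1_mul_e2 h.e2_mul_e1 h.e1_add_e2 h.corner_a1 h.corner_b1
    h.corner_b2 h.corner_a2 h.a1_mul_b1 h.b2_mul_a2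

theorem phi_mul_Es_mul_phi (h : IsLocalizedDoubledA2 e1 e2 E Es b1 b2) :
    (b1 + (e2 + E * Es)) * Es * (b1 + (e2 + E * Es)) = Es := by
  have h1Es : e1 * Es = Es := h.isIdempotentElem_e1.mul_eq_of_mul_mul_eq h.corner_Es
  have hEs2 : Es * e2 = Es := h.isIdempotentElem_e2.mul_eq_of_mul_mul_eq' h.corner_Es
  have h2Es : e2 * Es = 0 := by
    rw [← h.corner_Es, ← mul_assoc, ← mul_assoc, h.e2_mul_e1, zero_mul, zero_mul]
  have hEsb1 : Es * b1 = 0 := mul_eq_zero_of_mul_mul_eq h.e2_mul_e1 h.corner_Es h.corner_b1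
  calc _ = b1 * (Es * b1) + b1 * (Es * e2) + b1 * Es * E * Es
        + e2 * Es * (b1 + (e2 + E * Es)) + E * (Es * Es) * (b1 + (e2 + E * Es)) := by
        noncomm_ring
    _ = b1 * Es + b1 * Es * E * Es := by
        rw [hEsb1, hEs2, h2Es, h.Es_mul_Es]
        noncomm_ring
    _ = b1 * (e1 + Es * E) * Es := by
        rw [mul_add, add_mul, mul_assoc b1 e1, h1Es, ← mul_assoc b1 Es E]
    _ = Es := by rw [h.b1_mul_a1, h1Es]

end IsLocalizedDoubledA2

section GradedCommutator

variable {k Ω : Type*} [Field k] [Ring Ω] [Algebra k Ω] {G : ℕ → Submodule k Ω} {x y : Ω}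

theorem mul_smodEq_mul_of_mem_zero {m : ℕ} (hx : x ∈ G m) (hy : y ∈ G 0) :
    x * y ≡ y * x [SMOD gradedCommSpan k G] :=
  SModEq.sub_mem.2 <| Submodule.subset_span ⟨m, 0, x, y, hx, hy, by simp⟩

theorem mul_smodEq_neg_mul_of_mem_one (hx : x ∈ G 1) (hy : y ∈ G 1) :
    x * y ≡ -(y * x) [SMOD gradedCommSpan k G] :=
  SModEq.sub_mem.2 <| Submodule.subset_span ⟨1, 1, x, y, hx, hy, by simp⟩

theorem mul_self_smodEq_zero_of_mem_one [NeZero (2 : k)] (hx : x ∈ G 1) :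
    x * x ≡ 0 [SMOD gradedCommSpan k G] := by
  have h := SModEq.sub_mem.1 (mul_smodEq_neg_mul_of_mem_one (G := G) hx hx)
  rw [sub_neg_eq_add, ← two_smul k] at h
  exact SModEq.zero.2 ((Submodule.smul_mem_iff _ two_ne_zero).1 h)

end GradedCommutator

section Derivation

variable {k Ω : Type*} [Field k] [Ring Ω] [Algebra k Ω] {G : ℕ → Submodule k Ω}
  {D : Ω →ₗ[k] Ω}

theorem leibniz_mul_mul_of_map_eq_zero (hD : ∀ x ∈ G 0, ∀ y, D (x * y) = D x * y + x * D y)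
    {e f x : Ω} (he : e ∈ G 0) (hx : x ∈ G 0) (hDe : D e = 0) (hDf : D f = 0) :
    D (e * x * f) = e * D x * f := by
  rw [mul_assoc, hD e he, hDe, zero_mul, zero_add, hD x hx, hDf, mul_zero, add_zero, mul_assoc]

theorem leibniz_eq_neg_of_corner_inverse
    (hD : ∀ x ∈ G 0, ∀ y, D (x * y) = D x * y + x * D y) {e b u : Ω} (hb : b ∈ G 0)
    (hbe : b * e = b) (hbu : b * u = e) (hub : u * b = e) (hDe : D e = 0) :
    D b = -(b * D u * b) := by
  have hDbu : D b * u = -(b * D u) := eq_neg_of_add_eq_zero_left (by rw [← hD b hb, hbu, hDe])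
  calc D b = D (b * e) := by rw [hbe]
    _ = D b * u * b := by rw [hD b hb, hDe, mul_zero, add_zero, ← hub, mul_assoc]
    _ = -(b * D u * b) := by rw [hDbu, neg_mul]

theorem mul_D_mul_D_smodEq_of_D_eq [NeZero (2 : k)]
    (hGmul : ∀ m n : ℕ, ∀ x y : Ω, x ∈ G m → y ∈ G n → x * y ∈ G (m + n))
    (hGD : ∀ x ∈ G 0, D x ∈ G 1) {e f φ b : Ω} (he : e ∈ G 0) (hf : f ∈ G 0) (hb : b ∈ G 0)
    (hee : e * e = 0) (hff : f * f = 0) (heDe : e * D e = 0) (hDee : D e * e = 0)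
    (hDφ : D φ = D e * f + e * D f - b * (D f * e + f * D e) * b) :
    f * D e * D φ ≡ e * D φ * D f [SMOD gradedCommSpan k G] := by
  have hDe_mem := hGD e he
  have hDf_mem := hGD f hf
  have hfDe : f * D e ∈ G 1 := hGmul 0 1 _ _ hf hDe_mem
  have hx : f * D e * b ∈ G 1 := hGmul 1 0 _ _ hfDe hb
  have hy : D f * e * b ∈ G 1 := hGmul 1 0 _ _ (hGmul 1 0 _ _ hDf_mem he) hb
  have hz : e * b * D f ∈ G 1 := hGmul 0 1 _ _ (hGmul 0 0 _ _ he hb) hDf_mem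
  have hw : e * b * (f * D e) * b ∈ G 1 :=
    hGmul 1 0 _ _ (hGmul 0 1 _ _ (hGmul 0 0 _ _ he hb) hfDe) hb
  have hfDeDef : f * D e * D e * f ≡ 0 [SMOD gradedCommSpan k G] := by
    refine (mul_smodEq_mul_of_mem_zero (hGmul 1 1 _ _ hfDe hDe_mem) hf).trans ?_
    simp only [← mul_assoc, hff, zero_mul, SModEq.refl]
  calc f * D e * D φ
      = f * D e * D e * f - (f * D e * b) * (D f * e * b) - (f * D e * b) * (f * D e * b) := by
        have hfDeeDf : f * D e * (e * D f) = 0 := by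
          rw [← mul_assoc, mul_assoc f, hDee, mul_zero, zero_mul]
        rw [hDφ, mul_sub, mul_add, hfDeeDf, add_zero]
        noncomm_ring
    _ ≡ 0 - -((D f * e * b) * (f * D e * b)) - 0 [SMOD gradedCommSpan k G] :=
        (hfDeDef.sub (mul_smodEq_neg_mul_of_mem_one hx hy)).sub
          (mul_self_smodEq_zero_of_mem_one hx)
    _ = -0 - -(D f * (e * b * (f * D e) * b)) := by noncomm_ring
    _ ≡ -((e * b * D f) * (e * b * D f)) - (e * b * (f * D e) * b) * D f
          [SMOD gradedCommSpan k G] :=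
        ((mul_self_smodEq_zero_of_mem_one hz).neg.sub
          (mul_smodEq_neg_mul_of_mem_one hw hDf_mem)).symm
    _ = e * D φ * D f := by
        rw [hDφ, mul_sub, mul_add, ← mul_assoc e (D e), heDe, ← mul_assoc e e, hee]
        noncomm_ring

theorem mul_D_mul_D_eq_of_mul_eq_one
    (hGmul : ∀ m n : ℕ, ∀ x y : Ω, x ∈ G m → y ∈ G n → x * y ∈ G (m + n))
    (hD : ∀ x ∈ G 0, ∀ y, D (x * y) = D x * y + x * D y) {e f φ ψ : Ω} (hf : f ∈ G 0)
    (hφ : φ ∈ G 0) (hψ : ψ ∈ G 0) (hφψ : φ * ψ = 1) (hψφ : ψ * φ = 1) (hφfφ : φ * f * φ = f) :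
    f * D ψ * D e = -(D f * (ψ * D e)) + D φ * (f * D e) + φ * D f * D e := by
  have hD1 : D 1 = 0 := by
    have h1 : (1 : Ω) ∈ G 0 := hφψ ▸ hGmul 0 0 _ _ hφ hψ
    simpa using hD 1 h1 1
  have hDψ : D ψ = -(ψ * D φ * ψ) :=
    leibniz_eq_neg_of_corner_inverse hD hψ (mul_one ψ) hψφ hφψ hD1
  have hfψ : f * ψ = φ * f := by rw [← hφfφ, mul_assoc _ φ ψ, hφψ, mul_one, hφfφ]
  have hφfDφ : φ * f * D φ = D f - D φ * f * φ - φ * D f * φ := by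
    have h := hD _ (hGmul 0 0 _ _ hφ hf) φ
    rw [hφfφ, hD φ hφ] at h
    rw [sub_sub, eq_sub_iff_add_eq]
    exact (h.trans (by noncomm_ring)).symm
  calc f * D ψ * D e = -(φ * f * D φ * (ψ * D e)) := by
        rw [hDψ, ← hfψ]
        noncomm_ring
    _ = -((D f - D φ * f * φ - φ * D f * φ) * (ψ * D e)) := by rw [hφfDφ]
    _ = -(D f * (ψ * D e)) + D φ * f * (φ * ψ) * D e + φ * D f * (φ * ψ) * D e := by
        noncomm_ring
    _ = -(D f * (ψ * D e)) + D φ * (f * D e) + φ * D f * D e := by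
        rw [hφψ, mul_one, mul_one, mul_assoc]

theorem omega_one_smodEq [NeZero (2 : k)]
    (hGmul : ∀ m n : ℕ, ∀ x y : Ω, x ∈ G m → y ∈ G n → x * y ∈ G (m + n))
    (hGD : ∀ x ∈ G 0, D x ∈ G 1) (hD : ∀ x ∈ G 0, ∀ y, D (x * y) = D x * y + x * D y)
    {e f φ ψ b : Ω} (he : e ∈ G 0) (hf : f ∈ G 0) (hφ : φ ∈ G 0) (hψ : ψ ∈ G 0) (hb : b ∈ G 0)
    (hφψ : φ * ψ = 1) (hψφ : ψ * φ = 1) (hφfφ : φ * f * φ = f)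
    (hee : e * e = 0) (hff : f * f = 0) (heDe : e * D e = 0) (hDee : D e * e = 0)
    (hDφ : D φ = D e * f + e * D f - b * (D f * e + f * D e) * b) :
    f * D e * D φ + φ * D f * D e - f * D ψ * D e - ψ * D e * D f
        + D f * D (e * φ) - D (e * φ) * D f
      ≡ (2 : k) • (φ * D f * D e - ψ * D e * D f) [SMOD gradedCommSpan k G] := by
  have hDe_mem := hGD e he
  have hDf_mem := hGD f hf
  calc _ = f * D e * D φ + D f * (ψ * D e) - D φ * (f * D e) - ψ * D e * D f
          + D f * D (e * φ) - D (e * φ) * D f := by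
        rw [mul_D_mul_D_eq_of_mul_eq_one hGmul hD hf hφ hψ hφψ hψφ hφfφ]
        noncomm_ring
    _ ≡ f * D e * D φ + -(ψ * D e * D f) - -(f * D e * D φ) - ψ * D e * D f
          + -(D (e * φ) * D f) - D (e * φ) * D f [SMOD gradedCommSpan k G] := by
        have h₁ := mul_smodEq_neg_mul_of_mem_one hDf_mem (hGmul 0 1 _ _ hψ hDe_mem)
        have h₂ := mul_smodEq_neg_mul_of_mem_one (hGD φ hφ) (hGmul 0 1 _ _ hf hDe_mem)
        have h₃ := mul_smodEq_neg_mul_of_mem_one hDf_mem (hGD _ (hGmul 0 0 _ _ he hφ))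
        exact (((((SModEq.refl _).add h₁).sub h₂).sub (SModEq.refl _)).add h₃).sub (SModEq.refl _)
    _ = (2 : k) • (f * D e * D φ - ψ * D e * D f)
          - (2 : k) • (D e * φ * D f + e * D φ * D f) := by
        rw [hD e he, add_mul]
        module
    _ ≡ (2 : k) • (f * D e * D φ - ψ * D e * D f)
          - (2 : k) • (-(φ * D f * D e) + f * D e * D φ) [SMOD gradedCommSpan k G] := by
        have hDeφDf : D e * φ * D f ≡ -(φ * D f * D e) [SMOD gradedCommSpan k G] := by
          rw [mul_assoc]
          exact mul_smodEq_neg_mul_of_mem_one hDe_mem (hGmul 0 1 _ _ hφ hDf_mem)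
        exact (SModEq.refl _).sub <| (hDeφDf.add
          (mul_D_mul_D_smodEq_of_D_eq hGmul hGD he hf hb hee hff heDe hDee hDφ).symm).smul _
    _ = (2 : k) • (φ * D f * D e - ψ * D e * D f) := by module

end Derivation

theorem omega_one_congruence_A2
    {k : Type*} [Field k] [CharZero k] {A : Type*} [Ring A] [Algebra k A]
    {Ω : Type*} [Ring Ω] [Algebra k Ω]
    -- the localized path algebra of the doubled `A₂` quiver
    (e1 e2 E Es b1 b2 : A)
    (h1 : e1 * e1 = e1) (h2 : e2 * e2 = e2)
    (h12 : e1 * e2 = 0) (h21 : e2 * e1 = 0) (hsum : e1 + e2 = 1)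
    (hE : e2 * E * e1 = E) (hEs : e1 * Es * e2 = Es)
    (hb1 : e1 * b1 * e1 = b1)
    (hb1l : (e1 + Es * E) * b1 = e1) (hb1r : b1 * (e1 + Es * E) = e1)
    (hb2 : e2 * b2 * e2 = b2)
    (hb2l : (e2 + E * Es) * b2 = e2) (hb2r : b2 * (e2 + E * Es) = e2)
    -- the algebra of noncommutative differential forms relative to `R`
    (ι : A →ₐ[k] Ω)
    (G : ℕ → Submodule k Ω)
    (hG0 : ∀ a : A, ι a ∈ G 0)
    (hGmul : ∀ m n : ℕ, ∀ x y : Ω, x ∈ G m → y ∈ G n → x * y ∈ G (m + n))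
    (D : Ω →ₗ[k] Ω)
    (hGD : ∀ m : ℕ, ∀ x : Ω, x ∈ G m → D x ∈ G (m + 1))
    (hLeib : ∀ (m : ℕ) (x y : Ω), x ∈ G m →
      D (x * y) = D x * y + ((-1 : k) ^ m) • (x * D y))
    (hDe1 : D (ι e1) = 0) (hDe2 : D (ι e2) = 0) :
    -- `Φ = a₁⁻¹ + a₂` and `Φ⁻¹ = a₁ + a₂⁻¹`
    (2 : k)⁻¹ • ((2 : k)⁻¹ •
        (ι Es * D (ι E) * D (ι (b1 + (e2 + E * Es))) +
         ι (b1 + (e2 + E * Es)) * D (ι Es) * D (ι E) -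
         ι Es * D (ι ((e1 + Es * E) + b2)) * D (ι E) -
         ι ((e1 + Es * E) + b2) * D (ι E) * D (ι Es) +
         D (ι Es) * D (ι (E * (b1 + (e2 + E * Es)))) -
         D (ι (E * (b1 + (e2 + E * Es)))) * D (ι Es))) -
      (2 : k)⁻¹ • (ι (b1 + (e2 + E * Es)) * D (ι Es) * D (ι E) -
        ι ((e1 + Es * E) + b2) * D (ι E) * D (ι Es)) ∈
      gradedCommSpan k G := by
  have hA : IsLocalizedDoubledA2 e1 e2 E Es b1 b2 :=
    ⟨h1, h2, h12, h21, hsum, hE, hEs, hb1, hb1l, hb1r, hb2, hb2l, hb2r⟩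
  have hD : ∀ x ∈ G 0, ∀ y, D (x * y) = D x * y + x * D y := fun x hx y => by
    simpa using hLeib 0 x y hx
  have hι12 : ι e1 * ι e2 = 0 := by rw [← map_mul, h12, map_zero]
  have hιE : ι e2 * ι E * ι e1 = ι E := by rw [← map_mul, ← map_mul, hE]
  have hDE : ι e2 * D (ι E) * ι e1 = D (ι E) := by
    rw [← leibniz_mul_mul_of_map_eq_zero hD (hG0 e2) (hG0 E) hDe2 hDe1, hιE]
  have hDb1 : D (ι b1) = -(ι b1 * D (ι (e1 + Es * E)) * ι b1) :=
    leibniz_eq_neg_of_corner_inverse hD (hG0 b1) (by rw [← map_mul, hA.b1_mul_e1])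
      (by rw [← map_mul, hb1r]) (by rw [← map_mul, hb1l]) hDe1
  have hDΦ : D (ι (b1 + (e2 + E * Es))) = D (ι E) * ι Es + ι E * D (ι Es)
      - ι b1 * (D (ι Es) * ι E + ι Es * D (ι E)) * ι b1 := by
    simp only [map_add, map_mul, hDb1, hDe1, hDe2, hD _ (hG0 E), hD _ (hG0 Es)]
    noncomm_ring
  have key := omega_one_smodEq hGmul (hGD 0) hD (hG0 E) (hG0 Es) (hG0 _) (hG0 _) (hG0 b1)
    (by rw [← map_mul, hA.phi_mul_phiInv, map_one])
    (by rw [← map_mul, hA.phiInv_mul_phi, map_one])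
    (by rw [← map_mul, ← map_mul, hA.phi_mul_Es_mul_phi])
    (by rw [← map_mul, hA.E_mul_E, map_zero]) (by rw [← map_mul, hA.Es_mul_Es, map_zero])
    (mul_eq_zero_of_mul_mul_eq hι12 hιE hDE) (mul_eq_zero_of_mul_mul_eq hι12 hDE hιE) hDΦ
  rw [map_mul ι E]
  convert SModEq.sub_mem.1 (key.smul (4 : k)⁻¹) using 1
  module
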